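/- arXiv:1106.3979 — 2 statements merged into one kernel-verified Lean document; each statement's English description precedes it below -/
import Mathlib

section
/- If ω and ω' are cofinal binary sequences, then there exists t ∈ ℤ such that translation by t is a graph isomorphism from X_ω to X_{ω'}; explicitly, if ω and ω' differ exactly at indices i₁ < ... < i_k, then t = ∑_{j=1}^k (x_{i_j} − y_{i_j})·2^{i_j − 1} works. -/
/-!
Every level of `X_ω` is an arithmetic progression of edges `2ⁿ z - aₙ ↦ 2ⁿ (z + 1) - aₙ`, so
translation by `t` carries level `n` of `X_ω` onto level `n` of `X_ω'` as soon as
`2ⁿ ∣ aₙ^ω - t - aₙ^ω'`. With `t = ∑_{i < i₀} (x_{i+1} - y_{i+1}) 2^i` this difference is a sum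
of terms `± (x_{i+1} - y_{i+1}) 2^i` with `i ≥ n`, because `x` and `y` agree from `i₀` on.
-/

def aseq (x : ℕ → ℤ) (n : ℕ) : ℤ :=
  (∑ i ∈ Finset.range n, x (i + 1) * 2 ^ i) - 2 ^ (n - 1)

def edgeSet (x : ℕ → ℤ) : ℕ → Set (ℤ × ℤ)
  | 0 => {p | ∃ z : ℤ, p = (z, z + 1)}
  | n + 1 => {p | ∃ z : ℤ,
      p = (2 ^ (n + 1) * z - aseq x (n + 1), 2 ^ (n + 1) * (z + 1) - aseq x (n + 1))}

open Finset

def scaledEdges (m a : ℤ) : Set (ℤ × ℤ) :=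
  Set.range fun z : ℤ => (m * z - a, m * (z + 1) - a)

theorem image_translate_scaledEdges {m a b t : ℤ} (h : m ∣ a - t - b) :
    (fun p : ℤ × ℤ => (p.1 + t, p.2 + t)) '' scaledEdges m a = scaledEdges m b := by
  obtain ⟨c, hc⟩ := h
  have hcomp : ((fun p : ℤ × ℤ => (p.1 + t, p.2 + t)) ∘ fun z : ℤ => (m * z - a, m * (z + 1) - a))
      = (fun z : ℤ => (m * z - b, m * (z + 1) - b)) ∘ fun z => z - c := by
    funext z
    simp only [Function.comp_apply, Prod.mk.injEq]
    constructor <;> linear_combination -hc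
  rw [scaledEdges, ← Set.range_comp, hcomp]
  exact (Equiv.subRight c).surjective.range_comp _

theorem edgeSet_eq_scaledEdges (x : ℕ → ℤ) : ∀ k, edgeSet x k = scaledEdges (2 ^ k) (aseq x k)
  | 0 => by
    -- `aseq x 0 = -1` (as `0 - 1 = 0` in ℕ), which only shifts the parameter `z`
    ext p
    simp only [edgeSet, scaledEdges, aseq, Set.mem_ofPred_eq, Set.mem_range]
    constructor
    · rintro ⟨z, rfl⟩
      exact ⟨z - 1, by simp⟩
    · rintro ⟨z, rfl⟩
      exact ⟨z + 1, by simp [add_assoc]⟩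
  | _ + 1 => by
    ext p
    simp only [edgeSet, scaledEdges, Set.mem_ofPred_eq, Set.mem_range, eq_comm]

theorem aseq_sub_aseq (x y : ℕ → ℤ) (n : ℕ) :
    aseq x n - aseq y n = ∑ i ∈ range n, (x (i + 1) - y (i + 1)) * 2 ^ i := by
  simp only [aseq, sub_mul, sum_sub_distrib]
  ring

theorem pow_dvd_sum_range_sub_sum_range {R : Type*} [CommRing R] (b : R) {f : ℕ → R}
    {i₀ : ℕ} (hf : ∀ i, i₀ ≤ i → f i = 0) (n : ℕ) :
    b ^ n ∣ ∑ i ∈ range n, f i * b ^ i - ∑ i ∈ range i₀, f i * b ^ i := by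
  rcases le_total i₀ n with hle | hle
  · have htail : ∑ i ∈ Ico i₀ n, f i * b ^ i = 0 :=
      sum_eq_zero fun i hi => by rw [hf i (mem_Ico.mp hi).1, zero_mul]
    rw [← sum_range_add_sum_Ico _ hle, htail, add_zero, sub_self]
    exact dvd_zero _
  · rw [← sum_range_add_sum_Ico _ hle, sub_add_cancel_left, dvd_neg]
    exact dvd_sum fun i hi => dvd_mul_of_dvd_right (pow_dvd_pow b (mem_Ico.mp hi).1) _

theorem stmt12_general (x y : ℕ → ℤ)
    (i₀ : ℕ) (h : ∀ i, i₀ ≤ i → x i = y i) :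
    ∃ t : ℤ, t = (∑ i ∈ Finset.range i₀, (x (i + 1) - y (i + 1)) * 2 ^ i) ∧
      Function.Bijective (fun z : ℤ => z + t) ∧
      ∀ k : ℕ, (fun p : ℤ × ℤ => (p.1 + t, p.2 + t)) '' edgeSet x k = edgeSet y k := by
  refine ⟨_, rfl, (Equiv.addRight _).bijective, fun k => ?_⟩
  have hdiff : ∀ i, i₀ ≤ i → x (i + 1) - y (i + 1) = 0 := fun i hi =>
    sub_eq_zero.mpr (h (i + 1) (hi.trans i.le_succ))
  rw [edgeSet_eq_scaledEdges, edgeSet_eq_scaledEdges]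
  apply image_translate_scaledEdges
  rw [sub_right_comm, aseq_sub_aseq]
  exact pow_dvd_sum_range_sub_sum_range 2 hdiff k

theorem stmt12 (x y : ℕ → ℤ) (hx : ∀ i, x i = 0 ∨ x i = 1) (hy : ∀ i, y i = 0 ∨ y i = 1)
    (i₀ : ℕ) (h : ∀ i, i₀ ≤ i → x i = y i) :
    ∃ t : ℤ, t = (∑ i ∈ Finset.range i₀, (x (i + 1) - y (i + 1)) * 2 ^ i) ∧
      Function.Bijective (fun z : ℤ => z + t) ∧
      ∀ k : ℕ, (fun p : ℤ × ℤ => (p.1 + t, p.2 + t)) '' edgeSet x k = edgeSet y k :=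
  stmt12_general x y i₀ h
end

section
/- If a binary sequence ω contains infinitely many 0's and infinitely many 1's, then every integer z belongs to 2^n ℤ − a_n^ω for some n ≥ 1 (equivalently, every vertex of X_ω has degree exactly 4). -/
/-!
If `z` lies in none of the progressions, then inductively `2 ^ n ∣ z + s n` for every `n`, where
`s n = ∑_{i ≤ n} x_i 2^(i-1)`: the `x_i` are the binary digits of `-z` read as a `2`-adic integer.
Since `0 ≤ s n < 2 ^ n`, once `2 ^ n > |z|` this forces `s n = -z` if `z ≤ 0` and `s n = 2 ^ n - z`
if `z > 0`, so the digits are eventually all `0` or eventually all `1`.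
-/

open Filter

theorem Int.two_pow_succ_dvd_of_not_dvd_sub {a : ℤ} {n : ℕ} (ha : 2 ^ n ∣ a)
    (hsub : ¬ 2 ^ (n + 1) ∣ a - 2 ^ n) : 2 ^ (n + 1) ∣ a := by
  obtain ⟨k, rfl⟩ := ha
  have hk : ¬ 2 ∣ k - 1 := fun ⟨j, hj⟩ =>
    hsub ⟨j, by rw [pow_succ]; linear_combination 2 ^ n * hj⟩
  obtain ⟨j, rfl⟩ : 2 ∣ k := by omega
  exact ⟨j, by ring⟩

def digitSum (x : ℕ → ℤ) (n : ℕ) : ℤ :=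
  ∑ i ∈ Finset.range n, x (i + 1) * 2 ^ i

namespace digitSum

variable {x : ℕ → ℤ}

theorem succ (n : ℕ) : digitSum x (n + 1) = digitSum x n + x (n + 1) * 2 ^ n :=
  Finset.sum_range_succ _ _

theorem nonneg (hx : ∀ i, x i = 0 ∨ x i = 1) (n : ℕ) : 0 ≤ digitSum x n :=
  Finset.sum_nonneg fun i _ => by rcases hx (i + 1) with h | h <;> simp [h]

theorem lt_two_pow (hx : ∀ i, x i = 0 ∨ x i = 1) (n : ℕ) : digitSum x n < 2 ^ n := by
  induction n with
  | zero => simp [digitSum]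
  | succ n ih =>
    rw [succ, pow_succ]
    rcases hx (n + 1) with h | h <;> simp only [h] <;> linarith [pow_pos (two_pos (α := ℤ)) n]

theorem eq_of_dvd_sub (hx : ∀ i, x i = 0 ∨ x i = 1) {m : ℤ} {n : ℕ}
    (hdvd : 2 ^ n ∣ m - digitSum x n) (hm : 0 ≤ m) (hmn : m < 2 ^ n) : digitSum x n = m := by
  have hlt : |m - digitSum x n| < 2 ^ n :=
    abs_sub_lt_iff.2 ⟨by linarith [nonneg hx n], by linarith [lt_two_pow hx n]⟩
  linarith [Int.eq_zero_of_abs_lt_dvd hdvd hlt]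

theorem eventually_digit_eq (hx : ∀ i, x i = 0 ∨ x i = 1) {m : ℤ}
    (hdvd : ∀ n, 2 ^ n ∣ m - digitSum x n) :
    ∃ c, ∀ᶠ n in atTop, x n = c := by
  set c : ℤ := if 0 ≤ m then 0 else 1
  -- once `2 ^ n > |m|`, `m + c * 2 ^ n` is the residue of `m` modulo `2 ^ n`
  have hS : ∀ᶠ n in atTop, digitSum x n = m + c * 2 ^ n := by
    filter_upwards [eventually_ge_atTop m.natAbs] with n hn
    have habs : |m| < 2 ^ n := by
      rw [Int.abs_eq_natAbs]; exact_mod_cast (Nat.lt_two_pow_self).trans_le' hn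
    refine eq_of_dvd_sub hx ?_ ?_ ?_
    · rw [add_sub_right_comm]; exact (hdvd n).add (dvd_mul_left _ _)
    all_goals
      rcases abs_lt.1 habs with ⟨h₁, h₂⟩
      by_cases hm : 0 ≤ m <;> simp only [c, hm, if_true, if_false] <;> linarith
  refine ⟨c, ?_⟩
  rw [← map_add_atTop_eq_nat 1, eventually_map]
  filter_upwards [hS, (tendsto_add_atTop_nat 1).eventually hS] with n hn hn₁
  have h : x (n + 1) * 2 ^ n = c * 2 ^ n := by
    rw [succ, hn, pow_succ] at hn₁; linear_combination hn₁
  exact mul_right_cancel₀ (by positivity) h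

end digitSum

theorem aseq_succ (x : ℕ → ℤ) (n : ℕ) : aseq x (n + 1) = digitSum x (n + 1) - 2 ^ n :=
  rfl

theorem two_pow_dvd_add_digitSum {x : ℕ → ℤ} {z : ℤ}
    (hz : ∀ n, 1 ≤ n → ¬ 2 ^ n ∣ z + aseq x n) (n : ℕ) : 2 ^ n ∣ z + digitSum x n := by
  induction n with
  | zero => simp
  | succ n ih =>
    refine Int.two_pow_succ_dvd_of_not_dvd_sub ?_ ?_
    · rw [digitSum.succ, ← add_assoc]; exact ih.add (dvd_mul_left _ _)
    · rw [add_sub_assoc, ← aseq_succ]; exact hz (n + 1) (by omega)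

theorem stmt17 (x : ℕ → ℤ) (hx : ∀ i, x i = 0 ∨ x i = 1)
    (h0 : {i : ℕ | x i = 0}.Infinite) (h1 : {i : ℕ | x i = 1}.Infinite) :
    ∀ z : ℤ, ∃ n : ℕ, 1 ≤ n ∧ ∃ w : ℤ, z = 2 ^ n * w - aseq x n := by
  intro z
  by_contra! hz
  have hdvd : ∀ n, 2 ^ n ∣ -z - digitSum x n := fun n => by
    rw [← neg_add']
    exact (two_pow_dvd_add_digitSum (fun n hn ⟨w, hw⟩ => hz n hn w (by linarith)) n).neg_right
  obtain ⟨c, hc⟩ := digitSum.eventually_digit_eq hx hdvd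
  have hfreq (d : ℤ) (hd : {i | x i = d}.Infinite) : d = c := by
    obtain ⟨i, hid, hic⟩ := ((Nat.frequently_atTop_iff_infinite.2 hd).and_eventually hc).exists
    exact hid.symm.trans hic
  exact zero_ne_one ((hfreq 0 h0).trans (hfreq 1 h1).symm)
end
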